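/- arXiv:1709.03147 — 3 statements merged into one kernel-verified Lean document; each statement's English description precedes it below -/
import Mathlib

section
/- Let α, k, t be real numbers with 0 < α < 1, k(1−α) ≥ 2, t > k + 1, and t > 1 + (α/(1−α))·k. Then (t−1−kα)/(k(1−α)) − 1 < (t−1)(t−2)/(k(k−1)) − 1; equivalently, (t−1−kα)/(k(1−α)) < (t−1)(t−2)/(k(k−1)). (This is the case of Lemma 2 where type_uvw = 3 and t^(3)_uvw > 1 + (α/(1−α))k: the per-triangle variance under WRS is strictly smaller than under Triest-IMPR.) -/
/-!
Clearing denominators and writing `s = t - 1`, the claim becomes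
`(s - kα)(k - 1) < s(s - 1)(1 - α)`, and the difference of the two sides factors as
`(s - k) · (s(1 - α) - α(k - 1))`. The first factor is positive because `t > k + 1`, the second
because `t > 1 + (α/(1-α))k` says exactly `αk < s(1 - α)`.
-/

lemma sub_mul_sub_one_lt_mul_sub_one_mul_one_sub {α k s : ℝ} (hα : 0 ≤ α) (hks : k < s)
    (hs : α * k < s * (1 - α)) :
    (s - k * α) * (k - 1) < s * (s - 1) * (1 - α) := by
  have hfactor : s * (s - 1) * (1 - α) - (s - k * α) * (k - 1)
      = (s - k) * (s * (1 - α) - α * (k - 1)) := by ring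
  have hpos : 0 < (s - k) * (s * (1 - α) - α * (k - 1)) :=
    mul_pos (sub_pos.2 hks) (by linarith)
  linarith

lemma mul_lt_mul_one_sub_of_div_mul_lt {α k s : ℝ} (hα : α < 1) (hs : α / (1 - α) * k < s) :
    α * k < s * (1 - α) := by
  rwa [div_mul_eq_mul_div, div_lt_iff₀ (sub_pos.2 hα)] at hs

/-- Type-3 case of Lemma 2 (with `t > 1 + (α/(1−α))k`): the per-triangle variance
under WRS is strictly smaller than under Triest-IMPR. -/
theorem wrs_type3_variance_comparison_largeT (α k t : ℝ)
    (hα0 : 0 < α) (hα1 : α < 1) (hk : k * (1 - α) ≥ 2)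
    (ht : t > k + 1) (ht' : t > 1 + (α / (1 - α)) * k) :
    (t - 1 - k * α) / (k * (1 - α)) - 1 < (t - 1) * (t - 2) / (k * (k - 1)) - 1 ∧
    (t - 1 - k * α) / (k * (1 - α)) < (t - 1) * (t - 2) / (k * (k - 1)) := by
  have hα1' : 0 < 1 - α := sub_pos.2 hα1
  have hk0 : 0 < k := pos_of_mul_pos_left (by linarith) hα1'.le
  have hk1 : 1 < k := by nlinarith
  have hcross := sub_mul_sub_one_lt_mul_sub_one_mul_one_sub hα0.le (by linarith : k < t - 1)
    (mul_lt_mul_one_sub_of_div_mul_lt hα1 (by linarith : α / (1 - α) * k < t - 1))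
  have key : (t - 1 - k * α) / (k * (1 - α)) < (t - 1) * (t - 2) / (k * (k - 1)) := by
    rw [div_lt_div_iff₀ (mul_pos hk0 hα1') (mul_pos hk0 (sub_pos.2 hk1))]
    have := mul_lt_mul_of_pos_left hcross hk0
    linarith
  exact ⟨sub_lt_sub_right key 1, key⟩
end

section
/- Let α, k, t be real numbers with 0 < α < 1/2, k(1−α) ≥ 2, and t > k + 1. Then (t−1−kα)/(k(1−α)) − 1 < (t−1)(t−2)/(k(k−1)) − 1; equivalently, (t−1−kα)/(k(1−α)) < (t−1)(t−2)/(k(k−1)). (This is the case of Lemma 2 where type_uvw = 3 and α < 0.5: the per-triangle variance under WRS is strictly smaller than under Triest-IMPR.) -/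
/-!
Both variances exceed `-1` by a multiple of `(t - 1 - k) / k > 0`: the WRS one by the factor
`1 / (1 - α)`, which is `< 2` because `α < 1/2`, and the Triest-IMPR one by `(t + k - 2) / (k - 1)`,
which is `> 2` because `t > k + 1`.
-/

section VarianceExcess

variable {α k t : ℝ}

lemma wrs_variance_sub_one (hk : k ≠ 0) (hα : 1 - α ≠ 0) :
    (t - 1 - k * α) / (k * (1 - α)) - 1 = (t - 1 - k) / k * (1 - α)⁻¹ := by
  field_simp
  ring

lemma impr_variance_sub_one (hk : k ≠ 0) (hk₁ : k - 1 ≠ 0) :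
    (t - 1) * (t - 2) / (k * (k - 1)) - 1 = (t - 1 - k) / k * ((t + k - 2) / (k - 1)) := by
  field_simp
  ring

lemma inv_one_sub_lt_two (hα : α < 1 / 2) : (1 - α)⁻¹ < 2 := by
  rw [inv_lt_comm₀ (by linarith) two_pos]
  linarith

lemma two_lt_add_sub_two_div_sub_one (hk : 1 < k) (ht : k + 1 < t) :
    2 < (t + k - 2) / (k - 1) := by
  rw [lt_div_iff₀ (by linarith)]
  linarith

end VarianceExcess

/-- Type-3 case of Lemma 2 (with `α < 0.5`): the per-triangle variance
under WRS is strictly smaller than under Triest-IMPR. -/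
theorem wrs_type3_variance_comparison_smallAlpha (α k t : ℝ)
    (hα0 : 0 < α) (hα1 : α < 1 / 2) (hk : k * (1 - α) ≥ 2) (ht : t > k + 1) :
    (t - 1 - k * α) / (k * (1 - α)) - 1 < (t - 1) * (t - 2) / (k * (k - 1)) - 1 ∧
    (t - 1 - k * α) / (k * (1 - α)) < (t - 1) * (t - 2) / (k * (k - 1)) := by
  have hk₂ : 2 < k := by nlinarith
  have hscale : 0 < (t - 1 - k) / k := div_pos (by linarith) (by linarith)
  have key : (t - 1 - k * α) / (k * (1 - α)) - 1 < (t - 1) * (t - 2) / (k * (k - 1)) - 1 := by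
    rw [wrs_variance_sub_one (by linarith) (by linarith),
      impr_variance_sub_one (by linarith) (by linarith)]
    exact mul_lt_mul_of_pos_left ((inv_one_sub_lt_two hα1).trans
      (two_lt_add_sub_two_div_sub_one (by linarith) ht)) hscale
  exact ⟨key, by linarith⟩
end

section
/- Let α, k, t be real numbers with 0 < α < 1, k(1−α) ≥ 2, and t > k + 1. Then ((t−1−kα)·(t−2−kα)) / ((k(1−α))·(k(1−α)−1)) > ((t−1)·(t−2)) / (k(k−1)). -/
/-- Type-4 case: the per-triangle variance under WRS is strictly larger than
under Triest-IMPR. -/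
theorem wrs_type4_variance_comparison (α k t : ℝ)
    (hα0 : 0 < α) (hα1 : α < 1) (hk : k * (1 - α) ≥ 2) (ht : t > k + 1) :
    ((t - 1 - k * α) * (t - 2 - k * α)) / ((k * (1 - α)) * (k * (1 - α) - 1)) >
      ((t - 1) * (t - 2)) / (k * (k - 1)) := by
  have h1α : 0 < 1 - α := by linarith
  have hk2 : k > 2 := by nlinarith
  have hm : k * (1 - α) ≥ 2 := hk
  have hden1 : 0 < k * (k - 1) := by nlinarith
  have hden2 : 0 < (k * (1 - α)) * (k * (1 - α) - 1) := by nlinarith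
  rw [gt_iff_lt, div_lt_div_iff₀ hden1 hden2]
  have hA : (t - 1) * (k * (1 - α)) < (t - 1 - k * α) * k := by nlinarith [mul_pos (mul_pos (show (0:ℝ) < k by linarith) hα0) (show (0:ℝ) < t - 1 - k by linarith)]
  have hB : (t - 2) * (k * (1 - α) - 1) < (t - 2 - k * α) * (k - 1) := by nlinarith [mul_pos (mul_pos (show (0:ℝ) < k by linarith) hα0) (show (0:ℝ) < t - k - 1 by linarith)]
  have hposA : 0 < (t - 1) * (k * (1 - α)) := by nlinarith
  have hposB : 0 < (t - 2) * (k * (1 - α) - 1) := by nlinarith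
  nlinarith [mul_lt_mul'' hA hB (le_of_lt hposA) (le_of_lt hposB)]
end
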